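/- arXiv:1204.3915 — 2 statements merged into one kernel-verified Lean document; each statement's English description precedes it below -/
import Mathlib

section
/- Assume the observation-driven model with the function g satisfying the contraction condition with a + b < 1, and let π be the unique stationary distribution of the conditional mean Markov chain {X_t}. Then the stationary mean is finite and satisfies E_π X_1 ≤ g(0,0)/(1 − (a+b)); moreover, for every t ≥ 1, E(X_t | X_1) ≤ g(0,0)·(1 − (a+b)^{t−1})/(1 − (a+b)) + (a+b)^{t−1} X_1. -/
open MeasureTheory Filter

noncomputable section

/-- The one-parameter exponential family distribution with natural parameter `η`:
the measure with density `y ↦ exp (η y − A η) * h y` with respect to the base measure `μ`. -/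
def expFam (μ : Measure ℝ) (A h : ℝ → ℝ) (η : ℝ) : Measure ℝ :=
  μ.withDensity fun y => ENNReal.ofReal (Real.exp (η * y - A η) * h y)

/-- The generalized inverse CDF `F_x⁻¹(u) = inf {t ≥ 0 : F_x t ≥ u}`, where `F_x` is the
CDF of the exponential family member with mean `x = B(η)`. -/
def qtl (μ : Measure ℝ) (A h B : ℝ → ℝ) (x u : ℝ) : ℝ :=
  sInf {t : ℝ | 0 ≤ t ∧ ENNReal.ofReal u ≤ expFam μ A h (Function.invFun B x) (Set.Iic t)}

/-- The iterated random function `f_u(x) = g (x, F_x⁻¹(u))`. -/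
def irf (μ : Measure ℝ) (A h B : ℝ → ℝ) (g : ℝ → ℝ → ℝ) (u x : ℝ) : ℝ :=
  g x (qtl μ A h B x u)

/-- The forward process `X_n(x) = (f_{U_n} ∘ ⋯ ∘ f_{U_1}) (x)`. -/
def fwd {Ω : Type*} (μ : Measure ℝ) (A h B : ℝ → ℝ) (g : ℝ → ℝ → ℝ) (U : ℕ → Ω → ℝ) :
    ℕ → ℝ → Ω → ℝ
  | 0 => fun x _ => x
  | n + 1 => fun x ω => irf μ A h B g (U (n + 1) ω) (fwd μ A h B g U n x ω)

/-- The backward process `Z_n(x) = (f_{U_1} ∘ ⋯ ∘ f_{U_n}) (x)`. -/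
def bwd {Ω : Type*} (μ : Measure ℝ) (A h B : ℝ → ℝ) (g : ℝ → ℝ → ℝ) (U : ℕ → Ω → ℝ) :
    ℕ → ℝ → Ω → ℝ
  | 0 => fun x _ => x
  | n + 1 => fun x ω => bwd μ A h B g U n (irf μ A h B g (U (n + 1) ω) x) ω

/-- The uniform distribution on `(0,1)`. -/
def unif01 : Measure ℝ := volume.restrict (Set.Ioo (0 : ℝ) 1)

/-- `π` is a stationary distribution of the Markov chain `X_t = g (X_{t−1}, Y_{t−1})`,
realized through the iterated random functions `f_u` driven by iid Uniform(0,1) inputs. -/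
def IsStationaryDist (μ : Measure ℝ) (A h B : ℝ → ℝ) (g : ℝ → ℝ → ℝ) (π : Measure ℝ) : Prop :=
  Measure.map (fun p : ℝ × ℝ => irf μ A h B g p.2 p.1) (π.prod unif01) = π

end

/-!
The contraction gives `g x y ≤ g 0 0 + a x + b y`, and the quantile transform `F_x⁻¹(U)` of a
uniform variable has mean `x`, so one step of the chain satisfies the drift inequality
`E[X_{t+1} | X_t] ≤ g(0,0) + (a+b) X_t`. Since `U_{t+1}` is independent of `X_t`, iterating the
drift along the forward process bounds `E(X_t | X_1)`; integrating it against the stationary law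
gives `m ≤ g(0,0) + (a+b) m` for `m = E_π X_1`.

To apply Fubini one needs a jointly measurable version of `(x, u) ↦ f_u(x)`. It exists because
`F_x⁻¹(u)` is monotone in `u` and, by the monotone likelihood ratio of the exponential family, in
`x` along the state space.
-/

open Set ENNReal ProbabilityTheory

instance isProbabilityMeasure_unif01 : IsProbabilityMeasure unif01 :=
  ⟨by simp [unif01]⟩

lemma ae_mem_Ioo_unif01 : ∀ᵐ u ∂unif01, u ∈ Ioo (0 : ℝ) 1 :=
  ae_restrict_mem measurableSet_Ioo

lemma ae_nonneg_of_measure_Iio_eq_zero {ν : Measure ℝ} (hν : ν (Iio 0) = 0) :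
    ∀ᵐ y ∂ν, 0 ≤ y :=
  measure_mono_null (fun y (hy : ¬ 0 ≤ y) => not_le.mp hy) hν

noncomputable def quantile (ν : Measure ℝ) (u : ℝ) : ℝ :=
  sInf {t : ℝ | 0 ≤ t ∧ ENNReal.ofReal u ≤ ν (Iic t)}

lemma qtl_eq_quantile (μ : Measure ℝ) (A h B : ℝ → ℝ) (x u : ℝ) :
    qtl μ A h B x u = quantile (expFam μ A h (Function.invFun B x)) u := rfl

section Quantile

variable {ν ν' : Measure ℝ} {u t : ℝ}

lemma quantile_nonneg : 0 ≤ quantile ν u :=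
  Real.sInf_nonneg fun _ ht => ht.1

lemma quantile_le_iff [IsProbabilityMeasure ν] (hu : u < 1) (ht : 0 ≤ t) :
    quantile ν u ≤ t ↔ u ≤ cdf ν t := by
  have hmem : ∀ s, 0 ≤ s → (u ≤ cdf ν s ↔ s ∈ {t : ℝ | 0 ≤ t ∧ ENNReal.ofReal u ≤ ν (Iic t)}) :=
    fun s hs => by simp [hs, ← ofReal_cdf, ofReal_le_ofReal_iff (cdf_nonneg ν s)]
  have hbdd : BddBelow {t : ℝ | 0 ≤ t ∧ ENNReal.ofReal u ≤ ν (Iic t)} := ⟨0, fun _ ht => ht.1⟩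
  refine ⟨fun hq => ?_, fun hut => csInf_le hbdd ((hmem t ht).mp hut)⟩
  obtain ⟨s, hs0, hus⟩ :=
    (((tendsto_cdf_atTop ν).eventually (lt_mem_nhds hu)).and (eventually_ge_atTop 0)).exists
  have hne : Set.Nonempty _ := ⟨s, (hmem s hus).mp hs0.le⟩
  rw [← (cdf ν).iInf_Ioi_eq t]
  refine le_ciInf fun s => ?_
  obtain ⟨s', hs', hs's⟩ := exists_lt_of_csInf_lt hne (hq.trans_lt s.2)
  exact ((hmem s' hs'.1).mpr hs').trans (monotone_cdf ν hs's.le)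

lemma le_cdf_quantile [IsProbabilityMeasure ν] (hu : u < 1) : u ≤ cdf ν (quantile ν u) :=
  (quantile_le_iff hu quantile_nonneg).mp le_rfl

lemma monotoneOn_quantile [IsProbabilityMeasure ν] : MonotoneOn (quantile ν) (Iio 1) :=
  fun _ _ _ hv huv => (quantile_le_iff (huv.trans_lt hv) quantile_nonneg).mpr
    (huv.trans (le_cdf_quantile hv))

lemma quantile_le_quantile_of_cdf_le [IsProbabilityMeasure ν] [IsProbabilityMeasure ν']
    (h : ∀ t, cdf ν' t ≤ cdf ν t) (hu : u < 1) : quantile ν u ≤ quantile ν' u :=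
  (quantile_le_iff hu quantile_nonneg).mpr ((le_cdf_quantile hu).trans (h _))

lemma quantile_le_of_forall_rat_lt [IsProbabilityMeasure ν] (hu : u < 1) (ht : 0 ≤ t)
    (h : ∀ q : ℚ, (q : ℝ) < u → quantile ν q ≤ t) : quantile ν u ≤ t :=
  (quantile_le_iff hu ht).mpr <| le_of_forall_rat_lt_imp_le fun q hq =>
    (quantile_le_iff (hq.trans hu) ht).mp (h q hq)

lemma unif01_setOf_lt_quantile [IsProbabilityMeasure ν] (ht : 0 ≤ t) :
    unif01 {u | t < quantile ν u} = ν (Ioi t) := by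
  have hset : {u | t < quantile ν u} ∩ Ioo 0 1 = Ioo (cdf ν t) 1 := by
    ext u
    simp only [mem_inter_iff, mem_ofPred_eq, mem_Ioo]
    constructor
    · rintro ⟨htu, -, hu⟩
      exact ⟨lt_of_not_ge fun h => htu.not_ge ((quantile_le_iff hu ht).mpr h), hu⟩
    · rintro ⟨hu0, hu⟩
      exact ⟨lt_of_not_ge fun h => hu0.not_ge ((quantile_le_iff hu ht).mp h),
        (cdf_nonneg ν t).trans_lt hu0, hu⟩
  rw [unif01, Measure.restrict_apply' measurableSet_Ioo, hset, Real.volume_Ioo,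
    ← compl_Iic, prob_compl_eq_one_sub measurableSet_Iic, ← ofReal_cdf,
    ENNReal.ofReal_sub _ (cdf_nonneg ν t), ENNReal.ofReal_one]

lemma lintegral_ofReal_quantile [IsProbabilityMeasure ν] (hν : ν (Iio 0) = 0) :
    ∫⁻ u, ENNReal.ofReal (quantile ν u) ∂unif01 = ∫⁻ y, ENNReal.ofReal y ∂ν := by
  have hmeas : AEMeasurable (quantile ν) unif01 :=
    aemeasurable_restrict_of_monotoneOn measurableSet_Ioo
      (monotoneOn_quantile.mono Ioo_subset_Iio_self)
  rw [lintegral_eq_lintegral_meas_lt _ (ae_of_all _ fun _ => quantile_nonneg) hmeas,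
    lintegral_eq_lintegral_meas_lt _ (ae_nonneg_of_measure_Iio_eq_zero hν) aemeasurable_id]
  refine setLIntegral_congr_fun measurableSet_Ioi fun t ht => ?_
  exact unif01_setOf_lt_quantile (le_of_lt ht)

lemma lintegral_ofReal_le_of_cdf_le [IsProbabilityMeasure ν] [IsProbabilityMeasure ν']
    (hν : ν (Iio 0) = 0) (hν' : ν' (Iio 0) = 0) (h : ∀ t, cdf ν' t ≤ cdf ν t) :
    ∫⁻ y, ENNReal.ofReal y ∂ν ≤ ∫⁻ y, ENNReal.ofReal y ∂ν' := by
  rw [← lintegral_ofReal_quantile hν, ← lintegral_ofReal_quantile hν']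
  refine lintegral_mono_ae (ae_mem_Ioo_unif01.mono fun u hu => ?_)
  exact ENNReal.ofReal_le_ofReal (quantile_le_quantile_of_cdf_le h hu.2)

end Quantile

lemma lintegral_le_const_add_mul {α : Type*} [MeasurableSpace α] {ρ : Measure α}
    [IsProbabilityMeasure ρ] {G f : α → ℝ≥0∞} {c r : ℝ≥0∞} (hr : r ≠ ⊤)
    (h : ∀ᵐ z ∂ρ, G z ≤ c + r * f z) : ∫⁻ z, G z ∂ρ ≤ c + r * ∫⁻ z, f z ∂ρ := by
  refine (lintegral_mono_ae h).trans_eq ?_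
  rw [lintegral_add_left measurable_const, lintegral_const, measure_univ, mul_one,
    lintegral_const_mul' _ _ hr]

section ExpFam

variable {μ : Measure ℝ} {A h : ℝ → ℝ} {η η' : ℝ}

lemma expFam_le_of_forall {E : Set ℝ} (hE : MeasurableSet E)
    (hd : ∀ y ∈ E, η * y - A η ≤ η' * y - A η') : expFam μ A h η E ≤ expFam μ A h η' E := by
  rw [expFam, expFam, withDensity_apply _ hE, withDensity_apply _ hE]
  refine setLIntegral_mono' hE fun y hy => ?_
  rw [ENNReal.ofReal_mul (Real.exp_nonneg _), ENNReal.ofReal_mul (Real.exp_nonneg _)]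
  gcongr ENNReal.ofReal (Real.exp ?_) * _
  exact hd y hy

lemma cdf_expFam_le (hη : η ≤ η') [IsProbabilityMeasure (expFam μ A h η)]
    [IsProbabilityMeasure (expFam μ A h η')] (t : ℝ) :
    cdf (expFam μ A h η') t ≤ cdf (expFam μ A h η) t := by
  rw [← ofReal_le_ofReal_iff (cdf_nonneg _ t), ofReal_cdf, ofReal_cdf]
  -- the log-likelihood ratio `(η' - η) y - (A η' - A η)` is monotone in `y`, so it has one sign
  -- on `Iic t` or on `Ioi t`; compare the densities there
  rcases le_or_gt ((η' - η) * t) (A η' - A η) with hd | hd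
  · refine expFam_le_of_forall measurableSet_Iic fun y hy => ?_
    nlinarith [mul_le_mul_of_nonneg_left (mem_Iic.mp hy) (sub_nonneg.mpr hη)]
  · rw [← compl_Ioi, prob_compl_eq_one_sub measurableSet_Ioi,
      prob_compl_eq_one_sub measurableSet_Ioi]
    refine tsub_le_tsub_left (expFam_le_of_forall measurableSet_Ioi fun y hy => ?_) _
    nlinarith [mul_le_mul_of_nonneg_left (mem_Ioi.mp hy).le (sub_nonneg.mpr hη)]

lemma cdf_expFam_invFun_le {B : ℝ → ℝ} {S : Set ℝ} (hB : StrictMono B) (hSB : S ⊆ range B)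
    (hprob : ∀ x ∈ S, IsProbabilityMeasure (expFam μ A h (Function.invFun B x)))
    {w w' : ℝ} (hw : w ∈ S) (hw' : w' ∈ S) (hww' : w ≤ w') (t : ℝ) :
    cdf (expFam μ A h (Function.invFun B w')) t ≤ cdf (expFam μ A h (Function.invFun B w)) t := by
  have := hprob w hw
  have := hprob w' hw'
  refine cdf_expFam_le ?_ t
  rwa [← hB.le_iff_le, Function.invFun_eq (hSB hw), Function.invFun_eq (hSB hw')]

end ExpFam

section Modification

variable (F : ℝ → Measure ℝ) (S : Set ℝ)

/-- A jointly measurable version of `(z, u) ↦ quantile (F z) u`: a countable supremum of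
indicators in `u` times monotone functions of `z`. When `F` is stochastically increasing on `S`,
left-continuity of the quantile makes it agree with `quantile (F z) u` on `S × Iio 1`. -/
noncomputable def quantileSup (z u : ℝ) : ℝ≥0∞ :=
  ⨆ q : ℚ, if (q : ℝ) < u then ⨆ w ∈ S ∩ Iic z, ENNReal.ofReal (quantile (F w) q) else 0

lemma measurable_quantileSup : Measurable (Function.uncurry (quantileSup F S)) := by
  refine Measurable.iSup fun q => Measurable.ite
    (measurableSet_lt measurable_const measurable_snd) ?_ measurable_const
  have hmono : Monotone fun z => ⨆ w ∈ S ∩ Iic z, ENNReal.ofReal (quantile (F w) q) :=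
    fun z z' hz => biSup_mono fun w hw => ⟨hw.1, hw.2.trans hz⟩
  exact hmono.measurable.comp measurable_fst

variable {F S}

lemma quantileSup_eq (hF : ∀ w ∈ S, IsProbabilityMeasure (F w))
    (hmono : ∀ w ∈ S, ∀ w' ∈ S, w ≤ w' → ∀ t, cdf (F w') t ≤ cdf (F w) t)
    {z u : ℝ} (hz : z ∈ S) (hu : u < 1) :
    quantileSup F S z u = ENNReal.ofReal (quantile (F z) u) := by
  have := hF z hz
  apply le_antisymm
  · refine iSup_le fun q => ?_
    split_ifs with hq
    · refine iSup₂_le fun w hw => ENNReal.ofReal_le_ofReal ?_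
      have := hF w hw.1
      exact (quantile_le_quantile_of_cdf_le (hmono w hw.1 z hz hw.2) (hq.trans hu)).trans
        (monotoneOn_quantile (hq.trans hu) hu hq.le)
    · exact zero_le
  · have hq (q : ℚ) (hq : (q : ℝ) < u) :
        ENNReal.ofReal (quantile (F z) q) ≤ quantileSup F S z u :=
      le_iSup_of_le q (by rw [if_pos hq]; exact le_iSup₂_of_le z ⟨hz, le_refl z⟩ le_rfl)
    rcases eq_or_ne (quantileSup F S z u) ⊤ with htop | htop
    · exact htop ▸ le_top
    · refine ENNReal.ofReal_le_of_le_toReal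
        (quantile_le_of_forall_rat_lt hu toReal_nonneg fun q hq' => ?_)
      exact (ENNReal.ofReal_le_iff_le_toReal htop).mp (hq q hq')

end Modification

section Contraction

variable {g : ℝ → ℝ → ℝ} {a b : ℝ}

lemma continuous_apply_max_zero (ha : 0 ≤ a) (hb : 0 ≤ b)
    (hcontr : ∀ x x' y y' : ℝ, 0 ≤ x → 0 ≤ x' → 0 ≤ y → 0 ≤ y' →
      |g x y - g x' y'| ≤ a * |x - x'| + b * |y - y'|) :
    Continuous fun p : ℝ × ℝ => g (max p.1 0) (max p.2 0) := by
  refine (LipschitzWith.of_dist_le_mul (K := (a + b).toNNReal) fun p q => ?_).continuous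
  rw [Real.dist_eq, Real.coe_toNNReal _ (add_nonneg ha hb), add_mul]
  have h1 : |max p.1 0 - max q.1 0| ≤ dist p q := by
    rw [Prod.dist_eq, Real.dist_eq]
    exact (abs_max_sub_max_le_abs _ _ _).trans (le_max_left _ _)
  have h2 : |max p.2 0 - max q.2 0| ≤ dist p q := by
    rw [Prod.dist_eq, Real.dist_eq p.2]
    exact (abs_max_sub_max_le_abs _ _ _).trans (le_max_right _ _)
  exact (hcontr _ _ _ _ (le_max_right _ _) (le_max_right _ _) (le_max_right _ _)
    (le_max_right _ _)).trans (add_le_add (mul_le_mul_of_nonneg_left h1 ha)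
      (mul_le_mul_of_nonneg_left h2 hb))

lemma ofReal_apply_le_apply_zero_add {x y : ℝ} (ha : 0 ≤ a) (hb : 0 ≤ b)
    (hcontr : ∀ x x' y y' : ℝ, 0 ≤ x → 0 ≤ x' → 0 ≤ y → 0 ≤ y' →
      |g x y - g x' y'| ≤ a * |x - x'| + b * |y - y'|) (hx : 0 ≤ x) (hy : 0 ≤ y) :
    ENNReal.ofReal (g x y) ≤
      ENNReal.ofReal (g 0 0) + ENNReal.ofReal a * ENNReal.ofReal x +
        ENNReal.ofReal b * ENNReal.ofReal y := by
  have h := (le_abs_self _).trans (hcontr x 0 y 0 hx le_rfl hy le_rfl)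
  rw [sub_zero, sub_zero, abs_of_nonneg hx, abs_of_nonneg hy] at h
  rw [← ENNReal.ofReal_mul ha, ← ENNReal.ofReal_mul hb]
  calc ENNReal.ofReal (g x y) ≤ ENNReal.ofReal (g 0 0 + a * x + b * y) :=
        ENNReal.ofReal_le_ofReal (by linarith)
    _ ≤ ENNReal.ofReal (g 0 0 + a * x) + ENNReal.ofReal (b * y) := ENNReal.ofReal_add_le
    _ ≤ _ := by gcongr; exact ENNReal.ofReal_add_le

end Contraction

section Model

variable {μ : Measure ℝ} {A h B : ℝ → ℝ} {g : ℝ → ℝ → ℝ} {a b : ℝ} {S : Set ℝ}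

lemma exists_measurable_eq_irf (hB : StrictMono B) (ha : 0 ≤ a) (hb : 0 ≤ b)
    (hcontr : ∀ x x' y y' : ℝ, 0 ≤ x → 0 ≤ x' → 0 ≤ y → 0 ≤ y' →
      |g x y - g x' y'| ≤ a * |x - x'| + b * |y - y'|)
    (hS0 : S ⊆ Ici 0) (hSB : S ⊆ range B)
    (hprob : ∀ x ∈ S, IsProbabilityMeasure (expFam μ A h (Function.invFun B x))) :
    ∃ K : ℝ → ℝ → ℝ, Measurable (Function.uncurry K) ∧
      ∀ z ∈ S, ∀ u < 1, K u z = irf μ A h B g u z := by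
  let F := fun w => expFam μ A h (Function.invFun B w)
  refine ⟨fun u z => g (max z 0) (max (quantileSup F S z u).toReal 0), ?_, fun z hz u hu => ?_⟩
  · exact (continuous_apply_max_zero ha hb hcontr).measurable.comp
      (measurable_snd.prodMk (measurable_toReal.comp
        ((measurable_quantileSup F S).comp measurable_swap)))
  · dsimp only
    rw [quantileSup_eq hprob (fun w hw w' hw' => cdf_expFam_invFun_le hB hSB hprob hw hw') hz hu,
      toReal_ofReal quantile_nonneg, max_eq_left (hS0 hz), max_eq_left quantile_nonneg]
    rfl

lemma mean_eq_toReal_lintegral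
    (hfamsupp : ∀ η, expFam μ A h η (Iio 0) = 0)
    (hmean : ∀ x ∈ S, ∫ y, y ∂expFam μ A h (Function.invFun B x) = x) {w : ℝ} (hw : w ∈ S) :
    w = (∫⁻ y, ENNReal.ofReal y ∂expFam μ A h (Function.invFun B w)).toReal := by
  rw [← integral_eq_lintegral_of_nonneg_ae (ae_nonneg_of_measure_Iio_eq_zero (hfamsupp _))
    aestronglyMeasurable_id, hmean w hw]

lemma eq_zero_of_lintegral_eq_top (hB : StrictMono B) (hS0 : S ⊆ Ici 0) (hSB : S ⊆ range B)
    (hfamsupp : ∀ η, expFam μ A h η (Iio 0) = 0)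
    (hprob : ∀ x ∈ S, IsProbabilityMeasure (expFam μ A h (Function.invFun B x)))
    (hmean : ∀ x ∈ S, ∫ y, y ∂expFam μ A h (Function.invFun B x) = x)
    {w₀ : ℝ} (hw₀ : w₀ ∈ S)
    (htop : ∫⁻ y, ENNReal.ofReal y ∂expFam μ A h (Function.invFun B w₀) = ⊤)
    {w : ℝ} (hw : w ∈ S) : w = 0 := by
  have hzero : w₀ = 0 := by rw [mean_eq_toReal_lintegral hfamsupp hmean hw₀, htop, toReal_top]
  have := hprob w hw
  have := hprob w₀ hw₀
  have hle := lintegral_ofReal_le_of_cdf_le (hfamsupp _) (hfamsupp _)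
    (cdf_expFam_invFun_le hB hSB hprob hw₀ hw (hzero ▸ hS0 hw))
  rw [htop, top_le_iff] at hle
  rw [mean_eq_toReal_lintegral hfamsupp hmean hw, hle, toReal_top]

lemma lintegral_irf_le (hB : StrictMono B) (ha : 0 ≤ a) (hb : 0 ≤ b)
    (hcontr : ∀ x x' y y' : ℝ, 0 ≤ x → 0 ≤ x' → 0 ≤ y → 0 ≤ y' →
      |g x y - g x' y'| ≤ a * |x - x'| + b * |y - y'|)
    (hS0 : S ⊆ Ici 0) (hSB : S ⊆ range B) (hSg : ∀ x ∈ S, ∀ y, 0 ≤ y → g x y ∈ S)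
    (hfamsupp : ∀ η, expFam μ A h η (Iio 0) = 0)
    (hprob : ∀ x ∈ S, IsProbabilityMeasure (expFam μ A h (Function.invFun B x)))
    (hmean : ∀ x ∈ S, ∫ y, y ∂expFam μ A h (Function.invFun B x) = x) {z : ℝ} (hz : z ∈ S) :
    ∫⁻ u, ENNReal.ofReal (irf μ A h B g u z) ∂unif01 ≤
      ENNReal.ofReal (g 0 0) + ENNReal.ofReal (a + b) * ENNReal.ofReal z := by
  have := hprob z hz
  by_cases htop : ∫⁻ y, ENNReal.ofReal y ∂expFam μ A h (Function.invFun B z) = ⊤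
  · -- `hmean` reads an infinite mean as `0`; by stochastic monotonicity this forces `S ⊆ {0}`
    have hirf (u : ℝ) : irf μ A h B g u z = 0 :=
      eq_zero_of_lintegral_eq_top hB hS0 hSB hfamsupp hprob hmean hz htop
        (hSg z hz _ quantile_nonneg)
    simp [hirf]
  have hqtl : ∫⁻ u, ENNReal.ofReal (qtl μ A h B z u) ∂unif01 = ENNReal.ofReal z := by
    simp only [qtl_eq_quantile]
    rw [lintegral_ofReal_quantile (hfamsupp _), ← ofReal_toReal htop,
      ← mean_eq_toReal_lintegral hfamsupp hmean hz]
  calc ∫⁻ u, ENNReal.ofReal (irf μ A h B g u z) ∂unif01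
      ≤ (ENNReal.ofReal (g 0 0) + ENNReal.ofReal a * ENNReal.ofReal z) +
          ENNReal.ofReal b * ∫⁻ u, ENNReal.ofReal (qtl μ A h B z u) ∂unif01 :=
        lintegral_le_const_add_mul ofReal_ne_top <|
          ae_of_all _ fun u => ofReal_apply_le_apply_zero_add ha hb hcontr (hS0 hz) quantile_nonneg
    _ = ENNReal.ofReal (g 0 0) + ENNReal.ofReal (a + b) * ENNReal.ofReal z := by
        rw [hqtl, ENNReal.ofReal_add ha hb]
        ring

end Model

section Stationary

variable {K : ℝ → ℝ → ℝ} {S : Set ℝ} {c r : ℝ}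

lemma integral_id_le_of_map_eq (hK : Measurable (Function.uncurry K)) (hS0 : S ⊆ Ici 0)
    (hc : 0 ≤ c) (hr0 : 0 ≤ r) (hr : r < 1)
    (hdrift : ∀ z ∈ S, ∫⁻ u, ENNReal.ofReal (K u z) ∂unif01 ≤
      ENNReal.ofReal c + ENNReal.ofReal r * ENNReal.ofReal z)
    {π : Measure ℝ} [IsProbabilityMeasure π] (hπS : ∀ᵐ z ∂π, z ∈ S)
    (hstat : (π.prod unif01).map (fun p => K p.2 p.1) = π) :
    ∫ z, z ∂π ≤ c / (1 - r) := by
  have hKm : Measurable fun p : ℝ × ℝ => ENNReal.ofReal (K p.2 p.1) :=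
    measurable_ofReal.comp (hK.comp measurable_swap)
  have hM : ∫⁻ z, ENNReal.ofReal z ∂π ≤
      ENNReal.ofReal c + ENNReal.ofReal r * ∫⁻ z, ENNReal.ofReal z ∂π :=
    calc ∫⁻ z, ENNReal.ofReal z ∂π = ∫⁻ p, ENNReal.ofReal (K p.2 p.1) ∂(π.prod unif01) := by
          conv_lhs => rw [← hstat]
          exact lintegral_map measurable_ofReal (hK.comp measurable_swap)
      _ = ∫⁻ z, ∫⁻ u, ENNReal.ofReal (K u z) ∂unif01 ∂π := lintegral_prod _ hKm.aemeasurable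
      _ ≤ _ := lintegral_le_const_add_mul ofReal_ne_top (hπS.mono hdrift)
  rw [integral_eq_lintegral_of_nonneg_ae (hπS.mono fun z hz => hS0 hz) aestronglyMeasurable_id]
  generalize ∫⁻ z, ENNReal.ofReal z ∂π = M at hM ⊢
  rcases eq_or_ne M ⊤ with htop | htop
  · -- an infinite stationary mean makes the Bochner integral `0`
    rw [htop, toReal_top]
    exact div_nonneg hc (sub_nonneg.mpr hr.le)
  · have hM' := toReal_mono (by finiteness) hM
    rw [toReal_add ofReal_ne_top (by finiteness), toReal_mul, toReal_ofReal hc,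
      toReal_ofReal hr0] at hM'
    rw [le_div_iff₀ (sub_pos.mpr hr)]
    nlinarith

end Stationary

section Chain

variable {Ω : Type*}

noncomputable def markovIter (F : ℝ → ℝ → ℝ) (U : ℕ → Ω → ℝ) : ℕ → ℝ → Ω → ℝ
  | 0 => fun x _ => x
  | n + 1 => fun x ω => F (U (n + 1) ω) (markovIter F U n x ω)

lemma fwd_eq_markovIter (μ : Measure ℝ) (A h B : ℝ → ℝ) (g : ℝ → ℝ → ℝ) (U : ℕ → Ω → ℝ) :
    fwd μ A h B g U = markovIter (irf μ A h B g) U := by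
  funext n
  induction n with
  | zero => rfl
  | succ n ih => funext x ω; simp only [fwd, markovIter, ih]

variable {F F' : ℝ → ℝ → ℝ} {U : ℕ → Ω → ℝ} {S T : Set ℝ} {x : ℝ} {ω : Ω}

lemma markovIter_mem (hF : ∀ z ∈ S, ∀ u ∈ T, F u z ∈ S) (hx : x ∈ S) (hω : ∀ n, U n ω ∈ T)
    (n : ℕ) : markovIter F U n x ω ∈ S := by
  induction n with
  | zero => exact hx
  | succ n ih => exact hF _ ih _ (hω _)

lemma markovIter_congr (hF : ∀ z ∈ S, ∀ u ∈ T, F u z ∈ S)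
    (hFF' : ∀ z ∈ S, ∀ u ∈ T, F u z = F' u z) (hx : x ∈ S) (hω : ∀ n, U n ω ∈ T) (n : ℕ) :
    markovIter F U n x ω = markovIter F' U n x ω := by
  induction n with
  | zero => rfl
  | succ n ih =>
    simp only [markovIter]
    rw [hFF' _ (markovIter_mem hF hx hω n) _ (hω _), ih]

lemma measurable_markovIter_iSup_comap (hF : Measurable (Function.uncurry F)) (x : ℝ) (n : ℕ) :
    Measurable[⨆ k ∈ Iic n, MeasurableSpace.comap (U k) inferInstance] (markovIter F U n x) := by
  induction n with
  | zero => exact measurable_const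
  | succ n ih =>
    have hUn : Measurable[⨆ k ∈ Iic (n + 1), MeasurableSpace.comap (U k) inferInstance]
        (U (n + 1)) :=
      Measurable.of_comap_le (le_iSup₂_of_le (n + 1) (le_refl (n + 1)) le_rfl)
    have hle : (⨆ k ∈ Iic n, MeasurableSpace.comap (U k) inferInstance) ≤
        ⨆ k ∈ Iic (n + 1), MeasurableSpace.comap (U k) inferInstance :=
      biSup_mono fun k hk => le_trans hk n.le_succ
    exact hF.comp (hUn.prodMk (ih.mono hle le_rfl))

variable [MeasurableSpace Ω] {P : Measure Ω}

lemma measurable_markovIter (hF : Measurable (Function.uncurry F)) (hU : ∀ n, Measurable (U n))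
    (x : ℝ) (n : ℕ) : Measurable (markovIter F U n x) :=
  (measurable_markovIter_iSup_comap hF x n).mono (iSup₂_le fun k _ => (hU k).comap_le) le_rfl

lemma indepFun_markovIter (hF : Measurable (Function.uncurry F)) (hU : ∀ n, Measurable (U n))
    (hind : iIndepFun U P) (x : ℝ) (n : ℕ) :
    IndepFun (markovIter F U n x) (U (n + 1)) P := by
  rw [IndepFun_iff_Indep]
  have h := indep_iSup_of_disjoint (fun k => (hU k).comap_le)
    ((iIndepFun_iff_iIndep _ U P).mp hind)
    (Set.disjoint_singleton_right.mpr (notMem_Iic.mpr n.lt_succ_self))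
  rw [iSup_singleton] at h
  exact indep_of_indep_of_le_left h (measurable_markovIter_iSup_comap hF x n).comap_le

lemma ae_forall_mem_Ioo (hU : ∀ n, Measurable (U n)) (hUlaw : ∀ n, P.map (U n) = unif01) :
    ∀ᵐ ω ∂P, ∀ n, U n ω ∈ Ioo (0 : ℝ) 1 :=
  ae_all_iff.mpr fun n =>
    (ae_map_iff (hU n).aemeasurable measurableSet_Ioo).mp (hUlaw n ▸ ae_mem_Ioo_unif01)

variable [IsProbabilityMeasure P] {c r : ℝ}

lemma lintegral_markovIter_succ_le (hF : Measurable (Function.uncurry F))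
    (hU : ∀ n, Measurable (U n)) (hUlaw : ∀ n, P.map (U n) = unif01) (hind : iIndepFun U P)
    (hFS : ∀ z ∈ S, ∀ u ∈ Ioo 0 1, F u z ∈ S)
    (hdrift : ∀ z ∈ S, ∫⁻ u, ENNReal.ofReal (F u z) ∂unif01 ≤
      ENNReal.ofReal c + ENNReal.ofReal r * ENNReal.ofReal z)
    (hx : x ∈ S) (n : ℕ) :
    ∫⁻ ω, ENNReal.ofReal (markovIter F U (n + 1) x ω) ∂P ≤
      ENNReal.ofReal c + ENNReal.ofReal r * ∫⁻ ω, ENNReal.ofReal (markovIter F U n x ω) ∂P := by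
  have hX := measurable_markovIter hF hU x n
  have hFm : Measurable fun p : ℝ × ℝ => ENNReal.ofReal (F p.2 p.1) :=
    measurable_ofReal.comp (hF.comp measurable_swap)
  have hlaw : P.map (fun ω => (markovIter F U n x ω, U (n + 1) ω)) =
      (P.map (markovIter F U n x)).prod unif01 := by
    rw [← hUlaw (n + 1)]
    exact (indepFun_markovIter hF hU hind x n).map_prod_eq_prod_map_map hX.aemeasurable
      (hU _).aemeasurable
  calc ∫⁻ ω, ENNReal.ofReal (markovIter F U (n + 1) x ω) ∂P
      = ∫⁻ p, ENNReal.ofReal (F p.2 p.1) ∂((P.map (markovIter F U n x)).prod unif01) := by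
        rw [← hlaw, lintegral_map hFm (hX.prodMk (hU _))]
        rfl
    _ = ∫⁻ ω, ∫⁻ u, ENNReal.ofReal (F u (markovIter F U n x ω)) ∂unif01 ∂P := by
        rw [lintegral_prod _ hFm.aemeasurable, lintegral_map hFm.lintegral_prod_right' hX]
    _ ≤ _ := lintegral_le_const_add_mul ofReal_ne_top <|
        (ae_forall_mem_Ioo hU hUlaw).mono fun ω hω => hdrift _ (markovIter_mem hFS hx hω n)

lemma le_geom_of_le_add_mul {m : ℕ → ℝ≥0∞} {x : ℝ} (hc : 0 ≤ c) (hr0 : 0 ≤ r) (hx : 0 ≤ x)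
    (h0 : m 0 ≤ ENNReal.ofReal x)
    (hstep : ∀ n, m (n + 1) ≤ ENNReal.ofReal c + ENNReal.ofReal r * m n) (n : ℕ) :
    m n ≤ ENNReal.ofReal ((∑ k ∈ Finset.range n, r ^ k) * c + r ^ n * x) := by
  induction n with
  | zero => simpa using h0
  | succ n ih =>
    calc m (n + 1) ≤ ENNReal.ofReal c + ENNReal.ofReal r * m n := hstep n
      _ ≤ ENNReal.ofReal c + ENNReal.ofReal r *
          ENNReal.ofReal ((∑ k ∈ Finset.range n, r ^ k) * c + r ^ n * x) := by gcongr
      _ = ENNReal.ofReal ((∑ k ∈ Finset.range (n + 1), r ^ k) * c + r ^ (n + 1) * x) := by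
        rw [← ENNReal.ofReal_mul hr0, ← ENNReal.ofReal_add hc (by positivity), geom_sum_succ]
        ring_nf

lemma integral_markovIter_le (hF : Measurable (Function.uncurry F))
    (hU : ∀ n, Measurable (U n)) (hUlaw : ∀ n, P.map (U n) = unif01) (hind : iIndepFun U P)
    (hS0 : S ⊆ Ici 0) (hFS : ∀ z ∈ S, ∀ u ∈ Ioo 0 1, F u z ∈ S)
    (hdrift : ∀ z ∈ S, ∫⁻ u, ENNReal.ofReal (F u z) ∂unif01 ≤
      ENNReal.ofReal c + ENNReal.ofReal r * ENNReal.ofReal z)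
    (hc : 0 ≤ c) (hr0 : 0 ≤ r) (hx : x ∈ S) (n : ℕ) :
    ∫ ω, markovIter F U n x ω ∂P ≤ (∑ k ∈ Finset.range n, r ^ k) * c + r ^ n * x := by
  have hX := measurable_markovIter hF hU x n
  rw [integral_eq_lintegral_of_nonneg_ae ((ae_forall_mem_Ioo hU hUlaw).mono fun ω hω =>
    hS0 (markovIter_mem hFS hx hω n)) hX.aestronglyMeasurable]
  have hx0 : 0 ≤ x := hS0 hx
  refine toReal_le_of_le_ofReal (by positivity) (le_geom_of_le_add_mul hc hr0 hx0 ?_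
    (lintegral_markovIter_succ_le hF hU hUlaw hind hFS hdrift hx) n)
  simp [markovIter]

end Chain

theorem stmt4_general {Ω : Type*} [MeasurableSpace Ω] (P : Measure Ω) [IsProbabilityMeasure P]
    (μ : Measure ℝ) (A h B : ℝ → ℝ)
    (hB : StrictMono B)
    (g : ℝ → ℝ → ℝ) (a b : ℝ) (ha : 0 ≤ a) (hb : 0 ≤ b) (hab : a + b < 1)
    (hcontr : ∀ x x' y y' : ℝ, 0 ≤ x → 0 ≤ x' → 0 ≤ y → 0 ≤ y' →
      |g x y - g x' y'| ≤ a * |x - x'| + b * |y - y'|)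
    (hgnn : ∀ x y, 0 ≤ x → 0 ≤ y → 0 ≤ g x y)
    (S : Set ℝ) (hS0 : S ⊆ Set.Ici 0) (hSB : S ⊆ Set.range B)
    (hSg : ∀ x ∈ S, ∀ y, 0 ≤ y → g x y ∈ S)
    (hfamsupp : ∀ η, expFam μ A h η (Set.Iio 0) = 0)
    (hprob : ∀ x ∈ S, IsProbabilityMeasure (expFam μ A h (Function.invFun B x)))
    (hmean : ∀ x ∈ S, ∫ y, y ∂expFam μ A h (Function.invFun B x) = x)
    (U : ℕ → Ω → ℝ) (hU : ∀ n, Measurable (U n))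
    (hUlaw : ∀ n, Measure.map (U n) P = unif01)
    (hUindep : ProbabilityTheory.iIndepFun U P)
    (π : Measure ℝ) (hπ : IsProbabilityMeasure π) (hπsupp : π Sᶜ = 0)
    (hπstat : IsStationaryDist μ A h B g π) :
    (∀ x ∈ S, ∀ t : ℕ, 1 ≤ t →
      ∫ ω, fwd μ A h B g U (t - 1) x ω ∂P ≤
        (1 - (a + b) ^ (t - 1)) / (1 - (a + b)) * g 0 0 + (a + b) ^ (t - 1) * x) ∧
    ∫ x, x ∂π ≤ g 0 0 / (1 - (a + b)) := by
  obtain ⟨K, hKm, hK⟩ := exists_measurable_eq_irf hB ha hb hcontr hS0 hSB hprob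
  have hKS (z : ℝ) (hz : z ∈ S) (u : ℝ) (hu : u ∈ Ioo (0 : ℝ) 1) : K u z ∈ S :=
    hK z hz u hu.2 ▸ hSg z hz _ quantile_nonneg
  have hdrift (z : ℝ) (hz : z ∈ S) : ∫⁻ u, ENNReal.ofReal (K u z) ∂unif01 ≤
      ENNReal.ofReal (g 0 0) + ENNReal.ofReal (a + b) * ENNReal.ofReal z :=
    (lintegral_congr_ae (ae_mem_Ioo_unif01.mono fun u hu => by rw [hK z hz u hu.2])).trans_le
      (lintegral_irf_le hB ha hb hcontr hS0 hSB hSg hfamsupp hprob hmean hz)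
  have hc : 0 ≤ g 0 0 := hgnn 0 0 le_rfl le_rfl
  refine ⟨fun x hx t _ => ?_, ?_⟩
  · have hgeom : (1 - (a + b) ^ (t - 1)) / (1 - (a + b)) =
        ∑ k ∈ Finset.range (t - 1), (a + b) ^ k := by
      rw [geom_sum_eq hab.ne, ← neg_div_neg_eq, neg_sub, neg_sub]
    rw [fwd_eq_markovIter, hgeom]
    refine (integral_congr_ae ((ae_forall_mem_Ioo hU hUlaw).mono fun ω hω => ?_)).trans_le
      (integral_markovIter_le hKm hU hUlaw hUindep hS0 hKS hdrift hc (add_nonneg ha hb) hx _)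
    exact (markovIter_congr hKS (fun z hz u hu => hK z hz u hu.2) hx hω _).symm
  · have hstat : (π.prod unif01).map (fun p => K p.2 p.1) = π := by
      refine (Measure.map_congr ?_).trans hπstat
      filter_upwards [Measure.quasiMeasurePreserving_fst.ae hπsupp,
        Measure.quasiMeasurePreserving_snd.ae ae_mem_Ioo_unif01] with p hp1 hp2
      exact hK p.1 hp1 p.2 hp2.2
    exact integral_id_le_of_map_eq hKm hS0 hc (add_nonneg ha hb) hab hdrift hπsupp hstat

/-- under the contraction condition, with `π` the unique stationary
distribution, the stationary mean satisfies `E_π X₁ ≤ g(0,0)/(1 − (a+b))`, and for the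
chain started at `X₁ = x` one has, for every `t ≥ 1`,
`E(X_t | X₁ = x) ≤ g(0,0) (1 − (a+b)^{t−1})/(1 − (a+b)) + (a+b)^{t−1} x`. -/
theorem stmt4 {Ω : Type*} [MeasurableSpace Ω] (P : Measure Ω) [IsProbabilityMeasure P]
    (μ : Measure ℝ) [SigmaFinite μ] (A h B : ℝ → ℝ)
    (hB : StrictMono B) (hAB : ∀ η, HasDerivAt A (B η) η)
    (g : ℝ → ℝ → ℝ) (a b : ℝ) (ha : 0 ≤ a) (hb : 0 ≤ b) (hab : a + b < 1)
    (hcontr : ∀ x x' y y' : ℝ, 0 ≤ x → 0 ≤ x' → 0 ≤ y → 0 ≤ y' →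
      |g x y - g x' y'| ≤ a * |x - x'| + b * |y - y'|)
    (hgnn : ∀ x y, 0 ≤ x → 0 ≤ y → 0 ≤ g x y)
    (S : Set ℝ) (hS0 : S ⊆ Set.Ici 0) (hSB : S ⊆ Set.range B)
    (hSg : ∀ x ∈ S, ∀ y, 0 ≤ y → g x y ∈ S)
    (hfamsupp : ∀ η, expFam μ A h η (Set.Iio 0) = 0)
    (hprob : ∀ x ∈ S, IsProbabilityMeasure (expFam μ A h (Function.invFun B x)))
    (hmean : ∀ x ∈ S, ∫ y, y ∂expFam μ A h (Function.invFun B x) = x)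
    (U : ℕ → Ω → ℝ) (hU : ∀ n, Measurable (U n))
    (hUlaw : ∀ n, Measure.map (U n) P = unif01)
    (hUindep : ProbabilityTheory.iIndepFun U P)
    (π : Measure ℝ) (hπ : IsProbabilityMeasure π) (hπsupp : π Sᶜ = 0)
    (hπstat : IsStationaryDist μ A h B g π)
    (hπuniq : ∀ π' : Measure ℝ, IsProbabilityMeasure π' → π' Sᶜ = 0 →
      IsStationaryDist μ A h B g π' → π' = π) :
    (∀ x ∈ S, ∀ t : ℕ, 1 ≤ t →
      ∫ ω, fwd μ A h B g U (t - 1) x ω ∂P ≤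
        (1 - (a + b) ^ (t - 1)) / (1 - (a + b)) * g 0 0 + (a + b) ^ (t - 1) * x) ∧
    ∫ x, x ∂π ≤ g 0 0 / (1 - (a + b)) :=
  stmt4_general P μ A h B hB g a b ha hb hab hcontr hgnn S hS0 hSB hSg hfamsupp hprob hmean U hU
    hUlaw hUindep π hπ hπsupp hπstat
end

section
/- Assume the observation-driven model with the function g satisfying the contraction condition with a + b < 1, and let π be the unique stationary distribution of the conditional mean Markov chain {X_t}. If the chain starts from π, i.e. X_1 ∼ π, then the observation process {Y_t, t ≥ 1} is a (strictly) stationary time series. -/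
/-!
Write `Y_t = Q (X_t, ξ_{t+1})` with `X_{t+1} = f (X_t, U_{t+1})`, where `Q` is the quantile map
and `f (x, u) = g (x, Q (x, u))`. Then `(Y_t)_t = Φ (X₁, noise)` for one fixed map `Φ`, and
`(Y_{t+1})_t = Φ (X₂, shifted noise)`. By stationarity `X₂ = f (X₁, U₁)` has law `π`; it depends
only on `X₁, U₁`, so it is independent of the shifted noise, which has the same i.i.d. law as the
noise. Hence `(X₂, shifted noise)` and `(X₁, noise)` have the same law, and the shift preserves
the law of `(Y_t)_t`.

`Φ` has to be measurable, and joint measurability of `Q` is not available directly. However, on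
`S` the map `x ↦ Q (x, u)` is monotone, because the exponential family is stochastically
increasing in its mean, and `u ↦ Q (x, u)` is monotone and left-continuous. So on `S × (0,1)`,
`Q` coincides with a jointly measurable function built from monotone extensions at rational
levels `u`.
-/

open MeasureTheory Filter

open Set Function ProbabilityTheory
open scoped ENNReal

theorem measure_le_of_le_mul_of_mul_compl_le {α : Type*} [MeasurableSpace α]
    {ν ν' : Measure α} [IsProbabilityMeasure ν] [IsProbabilityMeasure ν'] {s : Set α}
    (hs : MeasurableSet s) {E : ℝ≥0∞} (h : ν' s ≤ E * ν s) (hc : E * ν sᶜ ≤ ν' sᶜ) :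
    ν' s ≤ ν s :=
  calc ν' s = ν' s * (ν s + ν sᶜ) := by rw [prob_add_prob_compl hs, mul_one]
    _ = ν' s * ν s + ν' s * ν sᶜ := mul_add _ _ _
    _ ≤ ν' s * ν s + ν s * ν' sᶜ := add_le_add le_rfl <|
        calc ν' s * ν sᶜ ≤ E * ν s * ν sᶜ := by gcongr
          _ = ν s * (E * ν sᶜ) := by ring
          _ ≤ ν s * ν' sᶜ := by gcongr
    _ = ν s * (ν' s + ν' sᶜ) := by ring
    _ = ν s := by rw [prob_add_prob_compl hs, mul_one]

section ExpFam

variable {μ : Measure ℝ} {A h : ℝ → ℝ}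

/-- The likelihood ratio of `expFam η'` to `expFam η` is `y ↦ exp ((η' - η) y - (A η' - A η))`,
which is monotone in `y`. -/
theorem expFam_Iic_le {η η' : ℝ} (hη : η ≤ η') [IsProbabilityMeasure (expFam μ A h η)]
    [IsProbabilityMeasure (expFam μ A h η')] (t : ℝ) :
    expFam μ A h η' (Iic t) ≤ expFam μ A h η (Iic t) := by
  set r : ℝ → ℝ≥0∞ := fun y => ENNReal.ofReal (Real.exp ((η' - η) * y - (A η' - A η)))
  have hr : Monotone r := fun y y' hy => ENNReal.ofReal_le_ofReal <| Real.exp_le_exp.2 <| by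
    nlinarith
  have hdens : ∀ y, ENNReal.ofReal (Real.exp (η' * y - A η') * h y) =
      r y * ENNReal.ofReal (Real.exp (η * y - A η) * h y) := fun y => by
    rw [← ENNReal.ofReal_mul (Real.exp_nonneg _), ← mul_assoc, ← Real.exp_add]
    ring_nf
  refine measure_le_of_le_mul_of_mul_compl_le measurableSet_Iic (E := r t) ?_ ?_
  · rw [expFam, expFam, withDensity_apply _ measurableSet_Iic,
      withDensity_apply _ measurableSet_Iic, ← lintegral_const_mul' _ _ ENNReal.ofReal_ne_top]
    refine setLIntegral_mono' measurableSet_Iic fun y hy => ?_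
    rw [hdens]
    gcongr
    exact hr hy
  · rw [compl_Iic, expFam, expFam, withDensity_apply _ measurableSet_Ioi,
      withDensity_apply _ measurableSet_Ioi, ← lintegral_const_mul' _ _ ENNReal.ofReal_ne_top]
    refine setLIntegral_mono' measurableSet_Ioi fun y hy => ?_
    rw [hdens]
    gcongr
    exact hr (le_of_lt hy)

end ExpFam

noncomputable def nonnegQuantile (ν : Measure ℝ) (u : ℝ) : ℝ :=
  sInf {t : ℝ | 0 ≤ t ∧ ENNReal.ofReal u ≤ ν (Iic t)}

theorem qtl_eq_nonnegQuantile (μ : Measure ℝ) (A h B : ℝ → ℝ) (x u : ℝ) :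
    qtl μ A h B x u = nonnegQuantile (expFam μ A h (invFun B x)) u :=
  rfl

section Quantile

variable {ν ν' : Measure ℝ} {u c : ℝ}

theorem nonnegQuantile_nonneg (ν : Measure ℝ) (u : ℝ) : 0 ≤ nonnegQuantile ν u :=
  Real.sInf_nonneg fun _ ht => ht.1

theorem qtl_nonneg (μ : Measure ℝ) (A h B : ℝ → ℝ) (x u : ℝ) : 0 ≤ qtl μ A h B x u := by
  rw [qtl_eq_nonnegQuantile]
  exact nonnegQuantile_nonneg _ _

theorem exists_nonneg_ofReal_le_measure_Iic [IsProbabilityMeasure ν] (hu : u < 1) :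
    ∃ t, 0 ≤ t ∧ ENNReal.ofReal u ≤ ν (Iic t) := by
  have hlim := tendsto_measure_Iic_atTop ν
  rw [measure_univ] at hlim
  obtain ⟨t, ht, ht0⟩ :=
    ((hlim.eventually (Ioi_mem_nhds (ENNReal.ofReal_lt_one.2 hu))).and
      (eventually_ge_atTop 0)).exists
  exact ⟨t, ht0, le_of_lt ht⟩

theorem nonnegQuantile_le_nonnegQuantile [IsProbabilityMeasure ν']
    (h : ∀ t, ν' (Iic t) ≤ ν (Iic t)) (hu : u < 1) :
    nonnegQuantile ν u ≤ nonnegQuantile ν' u :=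
  csInf_le_csInf ⟨0, fun _ ht => ht.1⟩ (exists_nonneg_ofReal_le_measure_Iic hu)
    fun t ht => ⟨ht.1, ht.2.trans (h t)⟩

theorem monotoneOn_nonnegQuantile [IsProbabilityMeasure ν] :
    MonotoneOn (nonnegQuantile ν) (Iio 1) := fun _ _ _ hv huv =>
  csInf_le_csInf ⟨0, fun _ ht => ht.1⟩ (exists_nonneg_ofReal_le_measure_Iic hv)
    fun _ ht => ⟨ht.1, (ENNReal.ofReal_le_ofReal huv).trans ht.2⟩

/-- The infimum is attained because `t ↦ ν (Iic t)` is right-continuous. -/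
theorem ofReal_le_measure_Iic_nonnegQuantile [IsProbabilityMeasure ν] (hu : u < 1) :
    ENNReal.ofReal u ≤ ν (Iic (nonnegQuantile ν u)) := by
  set q := nonnegQuantile ν u
  have hcont : ContinuousWithinAt (fun t => ν (Iic t)) (Ioi q) q := by
    simp_rw [← ofReal_cdf]
    exact (ENNReal.continuous_ofReal.continuousAt.comp_continuousWithinAt
      ((cdf ν).right_continuous q)).mono Ioi_subset_Ici_self
  refine ge_of_tendsto hcont (eventually_nhdsWithin_of_forall fun t (ht : q < t) => ?_)
  obtain ⟨t', ht', ht't⟩ := exists_lt_of_csInf_lt (exists_nonneg_ofReal_le_measure_Iic hu) ht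
  exact ht'.2.trans (measure_mono (Iic_subset_Iic.2 ht't.le))

theorem nonnegQuantile_le_of_forall_lt [IsProbabilityMeasure ν] (hu : u ∈ Ioo 0 1)
    (hc : ∀ v ∈ Ioo 0 u, nonnegQuantile ν v ≤ c) : nonnegQuantile ν u ≤ c := by
  refine csInf_le ⟨0, fun _ ht => ht.1⟩
    ⟨(nonnegQuantile_nonneg ν _).trans (hc (u / 2) ⟨by linarith [hu.1], by linarith [hu.1]⟩), ?_⟩
  refine le_of_forall_lt fun r hr => ?_
  obtain ⟨v, hrv, hvu⟩ := exists_between (max_lt (ENNReal.toReal_lt_of_lt_ofReal hr) hu.1)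
  calc r < ENNReal.ofReal v :=
        (ENNReal.lt_ofReal_iff_toReal_lt hr.ne_top).2 ((le_max_left _ _).trans_lt hrv)
    _ ≤ ν (Iic (nonnegQuantile ν v)) := ofReal_le_measure_Iic_nonnegQuantile (hvu.trans hu.2)
    _ ≤ ν (Iic c) := measure_mono <| Iic_subset_Iic.2 <|
        hc v ⟨(le_max_right _ _).trans_lt hrv, hvu⟩

end Quantile

theorem exists_measurable_eqOn_of_monotoneOn {F : ℝ → ℝ → ℝ} {S : Set ℝ}
    (hF0 : ∀ x ∈ S, ∀ u ∈ Ioo 0 1, 0 ≤ F x u)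
    (hFx : ∀ u ∈ Ioo 0 1, MonotoneOn (F · u) S)
    (hFu : ∀ x ∈ S, MonotoneOn (F x) (Ioo 0 1))
    (hFleft : ∀ x ∈ S, ∀ u ∈ Ioo 0 1, ∀ c, (∀ v ∈ Ioo 0 u, F x v ≤ c) → F x u ≤ c) :
    ∃ G : ℝ → ℝ → ℝ, Measurable (uncurry G) ∧ ∀ x ∈ S, ∀ u ∈ Ioo 0 1, G x u = F x u := by
  have hext : ∀ q : ℚ, ∃ g : ℝ → ℝ≥0∞, Monotone g ∧
      ∀ x ∈ S, (q : ℝ) ∈ Ioo 0 1 → g x = ENNReal.ofReal (F x q) := fun q => by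
    by_cases hq : (q : ℝ) ∈ Ioo 0 1
    · obtain ⟨g, hg, hgF⟩ := (ENNReal.ofReal_mono.comp_monotoneOn (hFx q hq)
        ).exists_monotone_extension (OrderBot.bddBelow _) (OrderTop.bddAbove _)
      exact ⟨g, hg, fun x hx _ => (hgF hx).symm⟩
    · exact ⟨0, monotone_const, fun _ _ h => absurd h hq⟩
  choose g hg hgF using hext
  -- a countable supremum, so measurable; it equals `F` by left-continuity of `F x`
  refine ⟨fun x u => (⨆ q : ℚ, if 0 < (q : ℝ) ∧ (q : ℝ) < u then g q x else 0).toReal,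
    Measurable.ennreal_toReal <| Measurable.iSup fun q => Measurable.ite
      ((MeasurableSet.const _).inter (measurableSet_lt measurable_const measurable_snd))
      ((hg q).measurable.comp measurable_fst) measurable_const, fun x hx u hu => ?_⟩
  set M := ⨆ q : ℚ, if 0 < (q : ℝ) ∧ (q : ℝ) < u then g q x else 0
  have hM : M = ⨆ q : ℚ, if 0 < (q : ℝ) ∧ (q : ℝ) < u then ENNReal.ofReal (F x q) else 0 :=
    iSup_congr fun q => by
      split_ifs with hq
      exacts [hgF q x hx ⟨hq.1, hq.2.trans hu.2⟩, rfl]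
  have hMle : M ≤ ENNReal.ofReal (F x u) := hM ▸ iSup_le fun q => by
    split_ifs with hq
    exacts [ENNReal.ofReal_le_ofReal (hFu x hx ⟨hq.1, hq.2.trans hu.2⟩ hu hq.2.le), zero_le]
  have hMne : M ≠ ⊤ := ne_top_of_le_ne_top ENNReal.ofReal_ne_top hMle
  refine le_antisymm (ENNReal.toReal_le_of_le_ofReal (hF0 x hx u hu) hMle)
    (hFleft x hx u hu _ fun v hv => ?_)
  obtain ⟨q, hvq, hqu⟩ := exists_rat_btwn hv.2
  have hq : (q : ℝ) ∈ Ioo 0 1 := ⟨hv.1.trans hvq, hqu.trans hu.2⟩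
  calc F x v ≤ F x q := hFu x hx ⟨hv.1, hv.2.trans hu.2⟩ hq hvq.le
    _ ≤ M.toReal := (ENNReal.ofReal_le_iff_le_toReal hMne).1 <|
        hM ▸ le_iSup_of_le q (by rw [if_pos ⟨hq.1, hqu⟩])

theorem StrictMono.invFun_le_invFun {α β : Type*} [LinearOrder α] [Preorder β] [Nonempty α]
    {B : α → β} (hB : StrictMono B) {x x' : β} (hx : x ∈ range B) (hx' : x' ∈ range B)
    (hxx' : x ≤ x') : invFun B x ≤ invFun B x' :=
  hB.le_iff_le.1 (by rwa [invFun_eq hx, invFun_eq hx'])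

theorem exists_measurable_qtl_eqOn {μ : Measure ℝ} {A h B : ℝ → ℝ} {S : Set ℝ}
    (hB : StrictMono B) (hSB : S ⊆ range B)
    (hprob : ∀ x ∈ S, IsProbabilityMeasure (expFam μ A h (invFun B x))) :
    ∃ G : ℝ → ℝ → ℝ, Measurable (uncurry G) ∧
      ∀ x ∈ S, ∀ u ∈ Ioo 0 1, G x u = qtl μ A h B x u := by
  simp only [qtl_eq_nonnegQuantile]
  refine exists_measurable_eqOn_of_monotoneOn (fun _ _ _ _ => nonnegQuantile_nonneg _ _)
    (fun u hu x hx x' hx' hxx' => ?_) (fun x hx => ?_) (fun x hx u hu c hc => ?_)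
  · have := hprob x hx
    have := hprob x' hx'
    exact nonnegQuantile_le_nonnegQuantile
      (expFam_Iic_le (hB.invFun_le_invFun (hSB hx) (hSB hx') hxx')) hu.2
  · have := hprob x hx
    exact monotoneOn_nonnegQuantile.mono Ioo_subset_Iio_self
  · have := hprob x hx
    exact nonnegQuantile_le_of_forall_lt hu hc

def forwardIter {α β : Type*} (f : α → β → α) (x : α) (u : ℕ → β) : ℕ → α
  | 0 => x
  | n + 1 => f (forwardIter f x u n) (u n)

section ForwardIter

variable {α β : Type*} {f f' : α → β → α} {x : α} {u : ℕ → β}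

theorem forwardIter_succ' (f : α → β → α) (x : α) (u : ℕ → β) (n : ℕ) :
    forwardIter f x u (n + 1) = forwardIter f (f x (u 0)) (fun k => u (k + 1)) n := by
  induction n with
  | zero => rfl
  | succ n ih => rw [forwardIter, ih]; rfl

theorem measurable_forwardIter [MeasurableSpace α] [MeasurableSpace β]
    (hf : Measurable (uncurry f)) (n : ℕ) :
    Measurable fun p : α × (ℕ → β) => forwardIter f p.1 p.2 n := by
  induction n with
  | zero => exact measurable_fst
  | succ n ih => exact hf.comp (ih.prodMk ((measurable_pi_apply n).comp measurable_snd))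

variable {S : Set α} {D : Set β}

theorem forwardIter_mem (hfS : ∀ x ∈ S, ∀ v ∈ D, f x v ∈ S) (hx : x ∈ S) (hu : ∀ k, u k ∈ D)
    (n : ℕ) : forwardIter f x u n ∈ S := by
  induction n with
  | zero => exact hx
  | succ n ih => exact hfS _ ih _ (hu n)

theorem forwardIter_congr (hfS : ∀ x ∈ S, ∀ v ∈ D, f x v ∈ S)
    (hff' : ∀ x ∈ S, ∀ v ∈ D, f x v = f' x v) (hx : x ∈ S) (hu : ∀ k, u k ∈ D) (n : ℕ) :
    forwardIter f x u n = forwardIter f' x u n := by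
  induction n with
  | zero => rfl
  | succ n ih => rw [forwardIter, forwardIter, ← ih, hff' _ (forwardIter_mem hfS hx hu n) _ (hu n)]

end ForwardIter

section Independence

variable {Ω ι κ β : Type*} [MeasurableSpace Ω] [MeasurableSpace β] {P : Measure Ω}
  {W : ι → Ω → β}

theorem ProbabilityTheory.iIndepFun.indepFun_restrict (hW : iIndepFun W P)
    (hWm : ∀ i, Measurable (W i)) {S T : Set ι} (hST : Disjoint S T) :
    IndepFun (fun ω (i : S) => W i ω) (fun ω (i : T) => W i ω) P := by
  have hle : ∀ R : Set ι, MeasurableSpace.comap (fun ω (i : R) => W i ω) MeasurableSpace.pi ≤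
      ⨆ i ∈ R, MeasurableSpace.comap (W i) ‹_› := fun R => by
    simp_rw [MeasurableSpace.pi, MeasurableSpace.comap_iSup, MeasurableSpace.comap_comp]
    exact iSup_le fun i => le_iSup₂ (f := fun j _ => MeasurableSpace.comap (W j) _) i.1 i.2
  rw [IndepFun_iff_Indep]
  exact indep_of_indep_of_le_right (indep_of_indep_of_le_left (indep_iSup_of_disjoint
    (fun i => (hWm i).comap_le) ((iIndepFun_iff_iIndep _ _ _).1 hW) hST) (hle S)) (hle T)

theorem ProbabilityTheory.iIndepFun.map_precomp_eq (hW : iIndepFun W P)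
    (hWm : ∀ i, Measurable (W i)) {e e' : κ → ι} (he : Injective e) (he' : Injective e')
    (hlaw : ∀ k, P.map (W (e k)) = P.map (W (e' k))) :
    P.map (fun ω k => W (e k) ω) = P.map (fun ω k => W (e' k) ω) := by
  rw [(hW.precomp he).map_fun_eq_infinitePi_map fun k => hWm _,
    (hW.precomp he').map_fun_eq_infinitePi_map fun k => hWm _]
  exact congrArg _ (funext hlaw)

end Independence

section Stationarity

variable {Ω β γ : Type*} {f : β → β → β} {Q : β → β → γ}

/-- `p.2 (.inl t)` drives the step from `X_t` to `X_{t+1}` and `p.2 (.inr t)` is the noise in the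
observation of `X_t`. -/
def observations (f : β → β → β) (Q : β → β → γ) (p : β × (ℕ ⊕ ℕ → β)) (t : ℕ) : γ :=
  Q (forwardIter f p.1 (p.2 ∘ .inl) t) (p.2 (.inr t))

theorem observations_succ (f : β → β → β) (Q : β → β → γ) (p : β × (ℕ ⊕ ℕ → β)) (t : ℕ) :
    observations f Q p (t + 1) =
      observations f Q (f p.1 (p.2 (.inl 0)), p.2 ∘ Sum.map .succ .succ) t := by
  simp only [observations, forwardIter_succ']
  rfl

variable [MeasurableSpace Ω] [MeasurableSpace β] [MeasurableSpace γ]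
  {P : Measure Ω} [IsProbabilityMeasure P] {π ν ν' : Measure β} {X₁ : Ω → β} {U ξ : ℕ → Ω → β}

theorem measurable_observations (hf : Measurable (uncurry f)) (hQ : Measurable (uncurry Q)) :
    Measurable (observations f Q) :=
  measurable_pi_lambda _ fun t => hQ.comp
    (((measurable_forwardIter hf t).comp (measurable_fst.prodMk
      (measurable_pi_lambda _ fun _ => (measurable_pi_apply _).comp measurable_snd))).prodMk
      ((measurable_pi_apply _).comp measurable_snd))

theorem map_next_state_eq (hf : Measurable (uncurry f)) (hX₁ : Measurable X₁)
    (hU : Measurable (U 1)) (hUlaw : P.map (U 1) = ν)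
    (hindep : IndepFun X₁ (U 1) P) (hX₁law : P.map X₁ = π)
    (hπ : (π.prod ν).map (uncurry f) = π) :
    P.map (fun ω => f (X₁ ω) (U 1 ω)) = π := by
  rw [← hπ, ← hX₁law, ← hUlaw,
    ← (indepFun_iff_map_prod_eq_prod_map_map hX₁.aemeasurable hU.aemeasurable).1 hindep,
    Measure.map_map hf (hX₁.prodMk hU)]
  rfl

theorem map_next_state_shifted_noise_eq (hf : Measurable (uncurry f)) (hX₁ : Measurable X₁)
    (hU : ∀ n, Measurable (U n)) (hξ : ∀ n, Measurable (ξ n))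
    (hUlaw : ∀ n, P.map (U n) = ν) (hξlaw : ∀ n, P.map (ξ n) = ν')
    (hindep : iIndepFun (Sum.elim (fun _ : Unit => X₁) (Sum.elim U ξ)) P)
    (hX₁law : P.map X₁ = π) (hπ : (π.prod ν).map (uncurry f) = π) :
    P.map (fun ω => (f (X₁ ω) (U 1 ω),
        fun j => Sum.elim U ξ (Sum.map .succ .succ (Sum.map .succ .succ j)) ω)) =
      P.map (fun ω => (X₁ ω, fun j => Sum.elim U ξ (Sum.map .succ .succ j) ω)) := by
  set W := Sum.elim (fun _ : Unit => X₁) (Sum.elim U ξ)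
  have hW : ∀ i, Measurable (W i) := by
    rintro (_ | k | k)
    exacts [hX₁, hU k, hξ k]
  set σ : ℕ ⊕ ℕ → ℕ ⊕ ℕ := Sum.map .succ .succ
  have hσ : Injective σ := Sum.map_injective.2 ⟨Nat.succ_injective, Nat.succ_injective⟩
  have htail : P.map (fun ω j => W (.inr (σ (σ j))) ω) = P.map (fun ω j => W (.inr (σ j)) ω) :=
    hindep.map_precomp_eq hW (Sum.inr_injective.comp (hσ.comp hσ)) (Sum.inr_injective.comp hσ)
      (by rintro (k | k); exacts [(hUlaw _).trans (hUlaw _).symm, (hξlaw _).trans (hξlaw _).symm])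
  have hind₁ : IndepFun X₁ (fun ω j => W (.inr (σ j)) ω) P := by
    have h := hindep.indepFun_restrict hW (S := {.inl ()}) (T := range fun j => .inr (σ j))
      (by simp)
    exact h.comp (measurable_pi_apply ⟨.inl (), rfl⟩)
      (measurable_pi_lambda (fun v j => v ⟨.inr (σ j), mem_range_self j⟩)
        fun j => measurable_pi_apply _)
  have hind₂ : IndepFun (fun ω => f (X₁ ω) (U 1 ω)) (fun ω j => W (.inr (σ (σ j))) ω) P := by
    have h := hindep.indepFun_restrict hW (S := {.inl (), .inr (.inl 1)})
      (T := range fun j => .inr (σ (σ j))) (by simp [σ])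
    exact h.comp (hf.comp ((measurable_pi_apply ⟨.inl (), by simp⟩).prodMk
        (measurable_pi_apply ⟨.inr (.inl 1), by simp⟩)))
      (measurable_pi_lambda (fun v j => v ⟨.inr (σ (σ j)), mem_range_self j⟩)
        fun j => measurable_pi_apply _)
  have hX₂ := map_next_state_eq hf hX₁ (hU 1) (hUlaw 1)
    (hindep.indepFun (i := .inl ()) (j := .inr (.inl 1)) (by simp)) hX₁law hπ
  have hpair₁ : P.map (fun ω => (X₁ ω, fun j => W (.inr (σ j)) ω)) =
      π.prod (P.map fun ω j => W (.inr (σ j)) ω) := by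
    rw [← hX₁law]
    exact (indepFun_iff_map_prod_eq_prod_map_map hX₁.aemeasurable
      (measurable_pi_lambda _ fun _ => hW _).aemeasurable).1 hind₁
  have hpair₂ : P.map (fun ω => (f (X₁ ω) (U 1 ω), fun j => W (.inr (σ (σ j))) ω)) =
      π.prod (P.map fun ω j => W (.inr (σ (σ j))) ω) := by
    rw [← hX₂]
    exact (indepFun_iff_map_prod_eq_prod_map_map (hf.comp (hX₁.prodMk (hU 1))).aemeasurable
      (measurable_pi_lambda _ fun _ => hW _).aemeasurable).1 hind₂
  rw [htail] at hpair₂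
  exact hpair₂.trans hpair₁.symm

theorem measurePreserving_shift_map_observations (hf : Measurable (uncurry f))
    (hQ : Measurable (uncurry Q)) (hX₁ : Measurable X₁)
    (hU : ∀ n, Measurable (U n)) (hξ : ∀ n, Measurable (ξ n))
    (hUlaw : ∀ n, P.map (U n) = ν) (hξlaw : ∀ n, P.map (ξ n) = ν')
    (hindep : iIndepFun (Sum.elim (fun _ : Unit => X₁) (Sum.elim U ξ)) P)
    (hX₁law : P.map X₁ = π) (hπ : (π.prod ν).map (uncurry f) = π) :
    MeasurePreserving (fun (y : ℕ → γ) t => y (t + 1))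
      (P.map fun ω => observations f Q (X₁ ω, fun j => Sum.elim U ξ (Sum.map .succ .succ j) ω))
      (P.map fun ω =>
        observations f Q (X₁ ω, fun j => Sum.elim U ξ (Sum.map .succ .succ j) ω)) := by
  set Z := fun ω => (X₁ ω, fun j => Sum.elim U ξ (Sum.map .succ .succ j) ω)
  set Z' := fun ω => (f (X₁ ω) (U 1 ω),
    fun j => Sum.elim U ξ (Sum.map .succ .succ (Sum.map .succ .succ j)) ω)
  have hZ : Measurable Z := hX₁.prodMk <| measurable_pi_lambda _ <| by
    rintro (_ | _)
    exacts [hU _, hξ _]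
  have hZ' : Measurable Z' := (hf.comp (hX₁.prodMk (hU 1))).prodMk <| measurable_pi_lambda _ <| by
    rintro (_ | _)
    exacts [hU _, hξ _]
  have hshift : Measurable fun (y : ℕ → γ) t => y (t + 1) :=
    measurable_pi_lambda _ fun t => measurable_pi_apply _
  have hobs := measurable_observations hf hQ
  refine ⟨hshift, ?_⟩
  calc (P.map (observations f Q ∘ Z)).map (fun y t => y (t + 1))
      = P.map ((fun y t => y (t + 1)) ∘ observations f Q ∘ Z) :=
        Measure.map_map hshift (hobs.comp hZ)
    _ = (P.map Z').map (observations f Q) := by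
        rw [Measure.map_map hobs hZ']
        exact congrArg (Measure.map · P) (funext fun ω => funext (observations_succ f Q (Z ω)))
    _ = (P.map Z).map (observations f Q) := by
        rw [map_next_state_shifted_noise_eq hf hX₁ hU hξ hUlaw hξlaw hindep hX₁law hπ]
    _ = P.map (observations f Q ∘ Z) := Measure.map_map hobs hZ

theorem map_observation_shift_eq (hf : Measurable (uncurry f))
    (hQ : Measurable (uncurry Q)) (hX₁ : Measurable X₁)
    (hU : ∀ n, Measurable (U n)) (hξ : ∀ n, Measurable (ξ n))
    (hUlaw : ∀ n, P.map (U n) = ν) (hξlaw : ∀ n, P.map (ξ n) = ν')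
    (hindep : iIndepFun (Sum.elim (fun _ : Unit => X₁) (Sum.elim U ξ)) P)
    (hX₁law : P.map X₁ = π) (hπ : (π.prod ν).map (uncurry f) = π) (n : ℕ) :
    P.map (fun ω t => Q (forwardIter f (X₁ ω) (fun k => U (k + 1) ω) (t + n)) (ξ (t + 1 + n) ω)) =
      P.map (fun ω t => Q (forwardIter f (X₁ ω) (fun k => U (k + 1) ω) t) (ξ (t + 1) ω)) := by
  have hiter : ∀ y : ℕ → γ, (fun y t => y (t + 1))^[n] y = fun t => y (t + n) := by
    induction n with
    | zero => exact fun _ => rfl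
    | succ m ih => intro y; rw [iterate_succ_apply, ih]; rfl
  have hmp := (measurePreserving_shift_map_observations hf hQ hX₁ hU hξ hUlaw hξlaw hindep
    hX₁law hπ).iterate n
  have hobs : Measurable fun ω =>
      observations f Q (X₁ ω, fun j => Sum.elim U ξ (Sum.map .succ .succ j) ω) :=
    (measurable_observations hf hQ).comp <| hX₁.prodMk <| measurable_pi_lambda _ <| by
      rintro (_ | _)
      exacts [hU _, hξ _]
  calc _ = P.map ((fun y t => y (t + 1))^[n] ∘ fun ω =>
        observations f Q (X₁ ω, fun j => Sum.elim U ξ (Sum.map .succ .succ j) ω)) := by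
        refine congrArg (Measure.map · P) (funext fun ω => funext fun t => ?_)
        rw [comp_apply, hiter]
        simp only [observations]
        rw [Nat.add_right_comm]
        rfl
    _ = _ := (Measure.map_map hmp.measurable hobs).symm
    _ = _ := hmp.map_eq

end Stationarity

theorem continuous_comp_max_of_abs_sub_le {g : ℝ → ℝ → ℝ} {a b : ℝ} (ha : 0 ≤ a) (hb : 0 ≤ b)
    (hg : ∀ x x' y y' : ℝ, 0 ≤ x → 0 ≤ x' → 0 ≤ y → 0 ≤ y' →
      |g x y - g x' y'| ≤ a * |x - x'| + b * |y - y'|) :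
    Continuous fun p : ℝ × ℝ => g (max p.1 0) (max p.2 0) := by
  refine (LipschitzWith.of_dist_le_mul (K := ⟨a + b, by positivity⟩) fun p q => ?_).continuous
  rw [Real.dist_eq]
  have hmax : ∀ s t : ℝ, |max s 0 - max t 0| ≤ |s - t| := fun s t => abs_max_sub_max_le_abs _ _ _
  calc |g (max p.1 0) (max p.2 0) - g (max q.1 0) (max q.2 0)|
      ≤ a * |max p.1 0 - max q.1 0| + b * |max p.2 0 - max q.2 0| :=
        hg _ _ _ _ (le_max_right _ _) (le_max_right _ _) (le_max_right _ _) (le_max_right _ _)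
    _ ≤ a * dist p q + b * dist p q := by
        gcongr
        · exact (hmax _ _).trans ((Real.dist_eq _ _).symm.trans_le (le_max_left _ _))
        · exact (hmax _ _).trans ((Real.dist_eq _ _).symm.trans_le (le_max_right _ _))
    _ = (a + b) * dist p q := by ring

theorem map_prod_unif01_congr {π : Measure ℝ} [IsProbabilityMeasure π] {S : Set ℝ}
    (hπS : π Sᶜ = 0) {f f' : ℝ → ℝ → ℝ} (hff' : ∀ x ∈ S, ∀ u ∈ Ioo 0 1, f x u = f' x u) :
    (π.prod unif01).map (uncurry f) = (π.prod unif01).map (uncurry f') := by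
  refine Measure.map_congr ?_
  have hS : ∀ᵐ p ∂π.prod unif01, p.1 ∈ S := Measure.quasiMeasurePreserving_fst.ae hπS
  have hI : ∀ᵐ p ∂π.prod unif01, p.2 ∈ Ioo (0 : ℝ) 1 :=
    Measure.quasiMeasurePreserving_snd.ae (ae_restrict_mem measurableSet_Ioo)
  filter_upwards [hS, hI] with p hp₁ hp₂
  exact hff' _ hp₁ _ hp₂

theorem ae_mem_Ioo_of_map_eq_unif01 {Ω : Type*} [MeasurableSpace Ω] {P : Measure Ω}
    {V : Ω → ℝ} (hV : Measurable V) (hVlaw : P.map V = unif01) :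
    ∀ᵐ ω ∂P, V ω ∈ Ioo (0 : ℝ) 1 :=
  ae_of_ae_map hV.aemeasurable (hVlaw ▸ ae_restrict_mem measurableSet_Ioo)

theorem fwd_eq_forwardIter {Ω : Type*} (μ : Measure ℝ) (A h B : ℝ → ℝ) (g : ℝ → ℝ → ℝ)
    (U : ℕ → Ω → ℝ) (n : ℕ) (x : ℝ) (ω : Ω) :
    fwd μ A h B g U n x ω =
      forwardIter (fun x u => irf μ A h B g u x) x (fun k => U (k + 1) ω) n := by
  induction n with
  | zero => rfl
  | succ n ih => simp only [fwd, ih]; rfl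

theorem qtl_fwd_eq_of_mem {Ω : Type*} {μ : Measure ℝ} {A h B : ℝ → ℝ} {g : ℝ → ℝ → ℝ}
    {S : Set ℝ} (hSg : ∀ x ∈ S, ∀ y, 0 ≤ y → g x y ∈ S) {G f : ℝ → ℝ → ℝ}
    (hGqtl : ∀ x ∈ S, ∀ u ∈ Ioo 0 1, G x u = qtl μ A h B x u)
    (hirf : ∀ x ∈ S, ∀ u ∈ Ioo 0 1, irf μ A h B g u x = f x u) {U : ℕ → Ω → ℝ} {x v : ℝ}
    {ω : Ω} (hx : x ∈ S) (hU : ∀ k, U (k + 1) ω ∈ Ioo 0 1) (hv : v ∈ Ioo 0 1) (t : ℕ) :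
    qtl μ A h B (fwd μ A h B g U t x ω) v = G (forwardIter f x (fun k => U (k + 1) ω) t) v := by
  have hirfS : ∀ x ∈ S, ∀ u, irf μ A h B g u x ∈ S := fun x hx u =>
    hSg x hx _ (qtl_nonneg μ A h B x u)
  rw [fwd_eq_forwardIter, forwardIter_congr (fun x hx u _ => hirfS x hx u) hirf hx hU,
    hGqtl _ (forwardIter_mem (fun x hx u hu => hirf x hx u hu ▸ hirfS x hx u) hx hU _) _ hv]

theorem stmt5_general {Ω : Type*} [MeasurableSpace Ω] (P : Measure Ω) [IsProbabilityMeasure P]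
    (μ : Measure ℝ) (A h B : ℝ → ℝ)
    (hB : StrictMono B)
    (g : ℝ → ℝ → ℝ) (a b : ℝ) (ha : 0 ≤ a) (hb : 0 ≤ b)
    (hcontr : ∀ x x' y y' : ℝ, 0 ≤ x → 0 ≤ x' → 0 ≤ y → 0 ≤ y' →
      |g x y - g x' y'| ≤ a * |x - x'| + b * |y - y'|)
    (S : Set ℝ) (hS0 : S ⊆ Set.Ici 0) (hSB : S ⊆ Set.range B)
    (hSg : ∀ x ∈ S, ∀ y, 0 ≤ y → g x y ∈ S)
    (hprob : ∀ x ∈ S, IsProbabilityMeasure (expFam μ A h (Function.invFun B x)))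
    (X₁ : Ω → ℝ) (U ξ : ℕ → Ω → ℝ)
    (hX₁meas : Measurable X₁) (hU : ∀ n, Measurable (U n)) (hξ : ∀ n, Measurable (ξ n))
    (hUlaw : ∀ n, Measure.map (U n) P = unif01)
    (hξlaw : ∀ n, Measure.map (ξ n) P = unif01)
    (hindep : ProbabilityTheory.iIndepFun
      (Sum.elim (fun _ : Unit => X₁) (Sum.elim U ξ)) P)
    (π : Measure ℝ) (hπ : IsProbabilityMeasure π) (hπsupp : π Sᶜ = 0)
    (hπstat : IsStationaryDist μ A h B g π)
    (hX₁law : Measure.map X₁ P = π) :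
    ∀ n : ℕ,
      Measure.map (fun ω => fun t : ℕ =>
        qtl μ A h B (fwd μ A h B g U (t + n) (X₁ ω) ω) (ξ (t + 1 + n) ω)) P =
      Measure.map (fun ω => fun t : ℕ =>
        qtl μ A h B (fwd μ A h B g U t (X₁ ω) ω) (ξ (t + 1) ω)) P := by
  intro n
  obtain ⟨G, hG, hGqtl⟩ := exists_measurable_qtl_eqOn hB hSB hprob
  set f : ℝ → ℝ → ℝ := fun x u => g (max x 0) (max (G x u) 0)
  have hf : Measurable (uncurry f) :=
    (continuous_comp_max_of_abs_sub_le ha hb hcontr).measurable.comp (measurable_fst.prodMk hG)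
  have hirf : ∀ x ∈ S, ∀ u ∈ Ioo 0 1, irf μ A h B g u x = f x u := fun x hx u hu => by
    show g x (qtl μ A h B x u) = g (max x 0) (max (G x u) 0)
    rw [hGqtl x hx u hu, max_eq_left (hS0 hx), max_eq_left (qtl_nonneg μ A h B x u)]
  have hgood : ∀ᵐ ω ∂P, X₁ ω ∈ S ∧ (∀ k, U k ω ∈ Ioo 0 1) ∧ ∀ k, ξ k ω ∈ Ioo 0 1 :=
    (ae_of_ae_map hX₁meas.aemeasurable (hX₁law ▸ hπsupp : ∀ᵐ x ∂P.map X₁, x ∈ S)).and <|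
      (ae_all_iff.2 fun k => ae_mem_Ioo_of_map_eq_unif01 (hU k) (hUlaw k)).and
      (ae_all_iff.2 fun k => ae_mem_Ioo_of_map_eq_unif01 (hξ k) (hξlaw k))
  have hY : ∀ m, (fun ω t => qtl μ A h B (fwd μ A h B g U (t + m) (X₁ ω) ω) (ξ (t + 1 + m) ω))
      =ᵐ[P] fun ω t => G (forwardIter f (X₁ ω) (fun k => U (k + 1) ω) (t + m)) (ξ (t + 1 + m) ω) :=
    fun m => hgood.mono fun ω ⟨hX, hUω, hξω⟩ => funext fun t =>
      qtl_fwd_eq_of_mem hSg hGqtl hirf hX (fun k => hUω (k + 1)) (hξω _) _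
  calc _ = P.map fun ω t => G (forwardIter f (X₁ ω) (fun k => U (k + 1) ω) (t + n))
        (ξ (t + 1 + n) ω) := Measure.map_congr (hY n)
    _ = P.map fun ω t => G (forwardIter f (X₁ ω) (fun k => U (k + 1) ω) t) (ξ (t + 1) ω) :=
        map_observation_shift_eq hf hG hX₁meas hU hξ hUlaw hξlaw hindep hX₁law
          ((map_prod_unif01_congr hπsupp hirf).symm.trans hπstat) n
    _ = _ := (Measure.map_congr (hY 0)).symm

/-- under the contraction condition, if the chain starts from its unique
stationary distribution `π` (i.e. `X₁ ∼ π`), then the observation process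
`Y_t = F_{X_t}⁻¹(ξ_t)` (with `{ξ_t}` iid Uniform(0,1) independent of `{X_t}`)
is a strictly stationary time series. -/
theorem stmt5 {Ω : Type*} [MeasurableSpace Ω] (P : Measure Ω) [IsProbabilityMeasure P]
    (μ : Measure ℝ) [SigmaFinite μ] (A h B : ℝ → ℝ)
    (hB : StrictMono B) (hAB : ∀ η, HasDerivAt A (B η) η)
    (g : ℝ → ℝ → ℝ) (a b : ℝ) (ha : 0 ≤ a) (hb : 0 ≤ b) (hab : a + b < 1)
    (hcontr : ∀ x x' y y' : ℝ, 0 ≤ x → 0 ≤ x' → 0 ≤ y → 0 ≤ y' →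
      |g x y - g x' y'| ≤ a * |x - x'| + b * |y - y'|)
    (hgnn : ∀ x y, 0 ≤ x → 0 ≤ y → 0 ≤ g x y)
    (S : Set ℝ) (hS0 : S ⊆ Set.Ici 0) (hSB : S ⊆ Set.range B)
    (hSg : ∀ x ∈ S, ∀ y, 0 ≤ y → g x y ∈ S)
    (hfamsupp : ∀ η, expFam μ A h η (Set.Iio 0) = 0)
    (hprob : ∀ x ∈ S, IsProbabilityMeasure (expFam μ A h (Function.invFun B x)))
    (hmean : ∀ x ∈ S, ∫ y, y ∂expFam μ A h (Function.invFun B x) = x)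
    (X₁ : Ω → ℝ) (U ξ : ℕ → Ω → ℝ)
    (hX₁meas : Measurable X₁) (hU : ∀ n, Measurable (U n)) (hξ : ∀ n, Measurable (ξ n))
    (hUlaw : ∀ n, Measure.map (U n) P = unif01)
    (hξlaw : ∀ n, Measure.map (ξ n) P = unif01)
    (hindep : ProbabilityTheory.iIndepFun
      (Sum.elim (fun _ : Unit => X₁) (Sum.elim U ξ)) P)
    (π : Measure ℝ) (hπ : IsProbabilityMeasure π) (hπsupp : π Sᶜ = 0)
    (hπstat : IsStationaryDist μ A h B g π)
    (hπuniq : ∀ π' : Measure ℝ, IsProbabilityMeasure π' → π' Sᶜ = 0 →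
      IsStationaryDist μ A h B g π' → π' = π)
    (hX₁law : Measure.map X₁ P = π) :
    ∀ n : ℕ,
      Measure.map (fun ω => fun t : ℕ =>
        qtl μ A h B (fwd μ A h B g U (t + n) (X₁ ω) ω) (ξ (t + 1 + n) ω)) P =
      Measure.map (fun ω => fun t : ℕ =>
        qtl μ A h B (fwd μ A h B g U t (X₁ ω) ω) (ξ (t + 1) ω)) P :=
  stmt5_general P μ A h B hB g a b ha hb hcontr S hS0 hSB hSg hprob X₁ U ξ hX₁meas hU hξ hUlaw hξlaw
    hindep π hπ hπsupp hπstat hX₁law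
end
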